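/- In a DAG, every node is d-separated from its non-descendants given its parents: for any node \(j\), the singleton \(\{j\}\) is d-separated from \(\mathrm{nd}(j) \setminus \mathrm{pa}(j)\) by \(\mathrm{pa}(j)\), where \(\mathrm{nd}(j)\) is the set of nodes \(k \ne j\) with no directed path from \(j\) to \(k\). -/

import Mathlib

/-- A directed acyclic graph on vertex set `Fin d`. -/
structure DAG (d : ℕ) where
  edges : Finset (Fin d × Fin d)
  acyclic : ∀ j, ¬ Relation.TransGen (fun a b => (a, b) ∈ edges) j j

namespace DAG

variable {d : ℕ}

/-- The edge relation `a → b`. -/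
def edge (G : DAG d) (a b : Fin d) : Prop := (a, b) ∈ G.edges

/-- The parent set of a node. -/
def pa (G : DAG d) (j : Fin d) : Finset (Fin d) :=
  Finset.univ.filter fun k => (k, j) ∈ G.edges

/-- Adjacency (skeleton relation). -/
def adj (G : DAG d) (a b : Fin d) : Prop := G.edge a b ∨ G.edge b a

/-- A trail (as a list of distinct consecutively adjacent nodes) is active given `C` if
every interior collider on it lies in `C` and no non-collider node lies in `C`. -/
def ActiveTrail (G : DAG d) (C : Set (Fin d)) (l : List (Fin d)) : Prop :=
  2 ≤ l.length ∧ l.Nodup ∧ l.Chain' G.adj ∧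
  (∀ i, (h : i + 2 < l.length) →
    (G.edge (l[i]'(by omega)) (l[i+1]'(by omega)) ∧
      G.edge (l[i+2]'h) (l[i+1]'(by omega))) →
    l[i+1]'(by omega) ∈ C) ∧
  (∀ i, (h : i < l.length) →
    (¬ ∃ (_ : 1 ≤ i) (h2 : i + 1 < l.length),
      G.edge (l[i-1]'(by omega)) (l[i]'h) ∧ G.edge (l[i+1]'h2) (l[i]'h)) →
    l[i]'h ∉ C)

/-- `A` and `B` are d-separated by `C` in `G`: there is no active trail given `C`
from a node of `A` to a node of `B`. -/
def dsep (G : DAG d) (A B C : Set (Fin d)) : Prop :=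
  ∀ a ∈ A, ∀ b ∈ B, ∀ l : List (Fin d),
    G.ActiveTrail C l → ¬(l.head? = some a ∧ l.getLast? = some b)

end DAG

/-!
Along an active trail `j = l₀ — l₁ — ⋯ — lₙ` given `pa j`, every edge points forward. The first one
does: if `l₁ → j` then `l₁ ∈ pa j` is a non-collider (`j → l₁` would close a 2-cycle). Inductively, if
`lᵢ → lᵢ₊₁` with `lᵢ₊₁` a descendant of `j`, then `lᵢ₊₁ ∉ pa j` by acyclicity, so it is not a collider
and `lᵢ₊₁ → lᵢ₊₂`. Hence the endpoint `lₙ` is a descendant of `j`.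
-/

namespace DAG

variable {d : ℕ} {G : DAG d}

theorem mem_pa_iff {j k : Fin d} : k ∈ G.pa j ↔ G.edge k j := by
  simp [pa, edge]

theorem not_edge_of_transGen {a b : Fin d} (h : Relation.TransGen G.edge a b) : ¬ G.edge b a :=
  fun hba => G.acyclic a (h.tail hba)

namespace ActiveTrail

variable {C : Set (Fin d)} {l : List (Fin d)}

theorem adj_getElem (hl : G.ActiveTrail C l) (i : ℕ) (h : i + 1 < l.length) :
    G.adj l[i] l[i + 1] :=
  List.isChain_iff_getElem.mp hl.2.2.1 i h

theorem edge_getElem_of_mem (hl : G.ActiveTrail C l) (i : ℕ) (h : i + 1 < l.length)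
    (hC : l[i + 1] ∈ C) : G.edge l[i] l[i + 1] := by
  by_contra hne
  exact hl.2.2.2.2 (i + 1) h (fun ⟨_, _, he, _⟩ => hne he) hC

theorem edge_succ_of_edge_of_not_mem (hl : G.ActiveTrail C l) (i : ℕ) (h : i + 2 < l.length)
    (he : G.edge l[i] l[i + 1]) (hC : l[i + 1] ∉ C) : G.edge l[i + 1] l[i + 2] :=
  (hl.adj_getElem (i + 1) h).resolve_right fun hback => hC (hl.2.2.2.1 i h ⟨he, hback⟩)

theorem edge_getElem_and_transGen {a : Fin d} (hl : G.ActiveTrail ↑(G.pa a) l)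
    (h0 : ∀ h : 0 < l.length, l[0] = a) :
    ∀ i (h : i + 1 < l.length), G.edge l[i] l[i + 1] ∧ Relation.TransGen G.edge a l[i + 1]
  | 0, h => by
    have hfirst : G.edge l[0] l[1] := by
      refine (hl.adj_getElem 0 h).resolve_right fun hback => ?_
      have hpa : l[1] ∈ (G.pa a : Set (Fin d)) := mem_pa_iff.mpr (h0 (by omega) ▸ hback)
      exact G.not_edge_of_transGen (.single (hl.edge_getElem_of_mem 0 h hpa)) hback
    exact ⟨hfirst, .single (h0 (by omega) ▸ hfirst)⟩
  | i + 1, h => by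
    obtain ⟨he, hdesc⟩ := edge_getElem_and_transGen hl h0 i (by omega)
    have hnotpa : l[i + 1] ∉ (G.pa a : Set (Fin d)) := fun hpa =>
      G.not_edge_of_transGen hdesc (mem_pa_iff.mp hpa)
    have hnext := hl.edge_succ_of_edge_of_not_mem i h he hnotpa
    exact ⟨hnext, hdesc.tail hnext⟩

theorem transGen_of_head?_of_getLast? {a b : Fin d} (hl : G.ActiveTrail ↑(G.pa a) l)
    (ha : l.head? = some a) (hb : l.getLast? = some b) : Relation.TransGen G.edge a b := by
  have h0 : ∀ h : 0 < l.length, l[0] = a := fun h => by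
    simpa [List.head?_eq_getElem?, List.getElem?_eq_getElem h] using ha
  have hlen : l.length - 2 + 1 < l.length := by have := hl.1; omega
  have hlast : l[l.length - 2 + 1] = b := by
    rw [List.getLast?_eq_getElem?, List.getElem?_eq_getElem (by omega)] at hb
    simpa [show l.length - 2 + 1 = l.length - 1 by omega] using hb
  exact hlast ▸ (hl.edge_getElem_and_transGen h0 (l.length - 2) hlen).2

end ActiveTrail

end DAG

/-- Every node is d-separated from its non-descendants (excluding its parents)
given its parents. -/
theorem dsep_nondescendants_given_parents (d : ℕ) (G : DAG d) (j : Fin d) :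
    G.dsep {j}
      {k | k ≠ j ∧ ¬ Relation.TransGen (fun a b => (a, b) ∈ G.edges) j k ∧ k ∉ G.pa j}
      ↑(G.pa j) := by
  rintro a rfl b ⟨-, hnd, -⟩ l hl ⟨ha, hb⟩
  exact hnd (hl.transGen_of_head?_of_getLast? ha hb)
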